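/- arXiv:2512.04541 — 2 statements merged into one kernel-verified Lean document; each statement's English description precedes it below -/
import Mathlib

section
/- Let D(β;λ) := ψ²(δβ²ρ+1) + (1-ρ²)(1-δβ²ρ)(s/τ), F(β;λ) := δβ² + ψ²ρ(1-δ²β⁴)/D(β;λ), and G(β;λ) := β - F(β;λ), where λ = (δ,ψ,ρ,s,τ). If |δ| < 1, 0 < ρ < 1, ψ ≠ 0, s > 0, and τ > 0, then G(0;λ) < 0 < G(1;λ); equivalently F(0;λ) = ψ²ρ/(ψ² + (1-ρ²)(s/τ)) > 0 and F(1;λ) = δ + ψ²ρ(1-δ²)/(ψ²(δρ+1)+(1-ρ²)(1-δρ)(s/τ)) < 1. -/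
/-- The denominator `D(β;λ)` with `λ = (δ,ψ,ρ,s,τ)`. -/
noncomputable def Dfun (δ ψ ρ s τ β : ℝ) : ℝ :=
  ψ ^ 2 * (δ * β ^ 2 * ρ + 1) + (1 - ρ ^ 2) * (1 - δ * β ^ 2 * ρ) * (s / τ)

/-- The fixed-point map `F(β;λ)`. -/
noncomputable def Ffun (δ ψ ρ s τ β : ℝ) : ℝ :=
  δ * β ^ 2 + ψ ^ 2 * ρ * (1 - δ ^ 2 * β ^ 4) / Dfun δ ψ ρ s τ β

/-- The equilibrium map `G(β;λ) = β - F(β;λ)`. -/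
noncomputable def Gfun (δ ψ ρ s τ β : ℝ) : ℝ :=
  β - Ffun δ ψ ρ s τ β

/-- If `|δ| < 1`, `0 < ρ < 1`, `ψ ≠ 0`, `s > 0`, `τ > 0`, then `G(0;λ) < 0 < G(1;λ)`;
equivalently `F(0;λ) = ψ²ρ/(ψ²+(1-ρ²)(s/τ)) > 0` and
`F(1;λ) = δ + ψ²ρ(1-δ²)/(ψ²(δρ+1)+(1-ρ²)(1-δρ)(s/τ)) < 1`. -/
theorem G_boundary_signs (δ ψ ρ s τ : ℝ) (hδ : |δ| < 1)
    (hρ0 : 0 < ρ) (hρ1 : ρ < 1) (hψ : ψ ≠ 0) (hs : 0 < s) (hτ : 0 < τ) :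
    Gfun δ ψ ρ s τ 0 < 0 ∧ 0 < Gfun δ ψ ρ s τ 1 ∧
    Ffun δ ψ ρ s τ 0 = ψ ^ 2 * ρ / (ψ ^ 2 + (1 - ρ ^ 2) * (s / τ)) ∧
    0 < Ffun δ ψ ρ s τ 0 ∧
    Ffun δ ψ ρ s τ 1 =
      δ + ψ ^ 2 * ρ * (1 - δ ^ 2) /
        (ψ ^ 2 * (δ * ρ + 1) + (1 - ρ ^ 2) * (1 - δ * ρ) * (s / τ)) ∧
    Ffun δ ψ ρ s τ 1 < 1 := by
  obtain ⟨hδm, hδ1⟩ := abs_lt.mp hδ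
  have hq : 0 < s / τ := div_pos hs hτ
  have hψ2 : 0 < ψ ^ 2 := by positivity
  have hρ2 : 0 < 1 - ρ ^ 2 := by nlinarith
  have hδρ1 : 0 < δ * ρ + 1 := by nlinarith
  have hδρ2 : 0 < 1 - δ * ρ := by nlinarith
  have hD0 : 0 < ψ ^ 2 + (1 - ρ ^ 2) * (s / τ) := by positivity
  have hD1 : 0 < ψ ^ 2 * (δ * ρ + 1) + (1 - ρ ^ 2) * (1 - δ * ρ) * (s / τ) := by positivity
  have hF0 : Ffun δ ψ ρ s τ 0 = ψ ^ 2 * ρ / (ψ ^ 2 + (1 - ρ ^ 2) * (s / τ)) := by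
    unfold Ffun Dfun; norm_num
  have hF1 : Ffun δ ψ ρ s τ 1 =
      δ + ψ ^ 2 * ρ * (1 - δ ^ 2) /
        (ψ ^ 2 * (δ * ρ + 1) + (1 - ρ ^ 2) * (1 - δ * ρ) * (s / τ)) := by
    unfold Ffun Dfun; norm_num
  have hF0pos : 0 < Ffun δ ψ ρ s τ 0 := by
    rw [hF0]; exact div_pos (by positivity) hD0
  have hF1lt : Ffun δ ψ ρ s τ 1 < 1 := by
    rw [hF1]
    have hlt : ψ ^ 2 * ρ * (1 - δ ^ 2) /
        (ψ ^ 2 * (δ * ρ + 1) + (1 - ρ ^ 2) * (1 - δ * ρ) * (s / τ)) < 1 - δ := by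
      rw [div_lt_iff₀ hD1]
      nlinarith [mul_pos hρ2 (mul_pos hδρ2 hq), mul_pos hψ2 (sub_pos.mpr hρ1)]
    linarith
  refine ⟨?_, ?_, hF0, hF0pos, hF1, hF1lt⟩
  · unfold Gfun; linarith
  · unfold Gfun; linarith
end

section
/- Let D(β;λ) := ψ²(δβ²ρ+1) + (1-ρ²)(1-δβ²ρ)(s/τ) and F(β;λ) := δβ² + ψ²ρ(1-δ²β⁴)/D(β;λ), where λ = (δ,ψ,ρ,s,τ). If |δ| < 1, 0 < ρ < 1, ψ ≠ 0, s > 0, and τ > 0, then the set S := {β ∈ [0,1] : β = F(β;λ)} of behavioural equilibria is nonempty, every element of S lies in the open interval (0,1), and S contains at most three elements. -/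
/-!
Multiplying `β = F β` by `D β`, which is positive on `[0, 1]`, turns the equilibria into the
roots in `[0, 1]` of a real polynomial `P` of degree at most four. Since `P 0 = -ψ²ρ < 0` and
`P 1 = (1 - δ)(ψ²(1 - ρ) + (1 - ρ²)(1 - δρ) s/τ) > 0`, the intermediate value theorem gives a
root in `(0, 1)` and neither endpoint is a root. If `P` has degree four, its leading coefficient
`δ²ρ(1 - ρ²) s/τ` is positive, so `P 0 < 0` forces a negative root as well, leaving at most three
nonnegative ones.
-/

open Polynomial Filter

lemma Finset.exists_subset_triple_of_card_le_three {α : Type*} [Infinite α] {t : Finset α}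
    (ht : t.card ≤ 3) : ∃ a b c : α, (t : Set α) ⊆ {a, b, c} := by
  classical
  obtain ⟨u, htu, hu⟩ := Infinite.exists_superset_card_eq t 3 ht
  obtain ⟨a, b, c, -, -, -, rfl⟩ := Finset.card_eq_three.1 hu
  exact ⟨a, b, c, by simpa using Finset.coe_subset.2 htu⟩

namespace Polynomial

theorem exists_neg_isRoot_of_even_natDegree {P : ℝ[X]} (heven : Even P.natDegree)
    (hlead : 0 < P.leadingCoeff) (h0 : P.eval 0 < 0) : ∃ r < 0, P.IsRoot r := by
  have hdeg : 0 < P.degree := by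
    by_contra! hle
    rw [eq_C_of_degree_le_zero hle] at h0 hlead
    simp only [eval_C, leadingCoeff_C] at h0 hlead
    linarith
  have htends : Tendsto (fun x => (P.comp (-X)).eval x) atTop atTop :=
    tendsto_atTop_of_leadingCoeff_nonneg _ (by simpa using hdeg)
      (by simpa [heven.neg_one_pow] using hlead.le)
  obtain ⟨y, hy, hy0⟩ := ((htends.eventually_gt_atTop 0).and (eventually_gt_atTop 0)).exists
  simp only [eval_comp, eval_neg, eval_X] at hy
  obtain ⟨r, hr, hroot⟩ := intermediate_value_Ioo' (neg_nonpos.2 hy0.le)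
    P.continuous.continuousOn ⟨h0, hy⟩
  exact ⟨r, hr.2, hroot⟩

theorem card_nonneg_roots_lt_natDegree {P : ℝ[X]} {r : ℝ} (hP : P ≠ 0) (hr : r < 0)
    (hroot : P.IsRoot r) : (P.roots.toFinset.filter (0 ≤ ·)).card < P.natDegree := by
  have hmem : r ∈ P.roots.toFinset := Multiset.mem_toFinset.2 ((mem_roots hP).2 hroot)
  calc (P.roots.toFinset.filter (0 ≤ ·)).card
      < P.roots.toFinset.card :=
        Finset.card_lt_card (Finset.filter_ssubset.2 ⟨r, hmem, hr.not_ge⟩)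
    _ ≤ P.natDegree := (Multiset.toFinset_card_le _).trans (card_roots' P)

end Polynomial

/-- The fixed-point equation `β = F β` multiplied out by the denominator `D β`. -/
noncomputable def equilibriumPoly (δ ψ ρ s τ : ℝ) : ℝ[X] :=
  C (δ ^ 2 * ρ * (1 - ρ ^ 2) * (s / τ)) * X ^ 4
    + C (δ * ρ * (ψ ^ 2 - (1 - ρ ^ 2) * (s / τ))) * X ^ 3
    - C (δ * (ψ ^ 2 + (1 - ρ ^ 2) * (s / τ))) * X ^ 2
    + C (ψ ^ 2 + (1 - ρ ^ 2) * (s / τ)) * X - C (ψ ^ 2 * ρ)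

section Equilibria

variable {δ ψ ρ s τ : ℝ}

theorem eval_equilibriumPoly (β : ℝ) : (equilibriumPoly δ ψ ρ s τ).eval β =
    (β - δ * β ^ 2) * Dfun δ ψ ρ s τ β - ψ ^ 2 * ρ * (1 - δ ^ 2 * β ^ 4) := by
  simp only [equilibriumPoly, Dfun, eval_add, eval_sub, eval_mul, eval_C, eval_pow, eval_X]
  ring

theorem natDegree_equilibriumPoly_le : (equilibriumPoly δ ψ ρ s τ).natDegree ≤ 4 := by
  unfold equilibriumPoly
  compute_degree

theorem coeff_equilibriumPoly_four :
    (equilibriumPoly δ ψ ρ s τ).coeff 4 = δ ^ 2 * ρ * (1 - ρ ^ 2) * (s / τ) := by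
  simp only [equilibriumPoly, coeff_add, coeff_sub, coeff_C_mul, coeff_X_pow, coeff_X, coeff_C]
  norm_num

theorem Dfun_pos (hδ : |δ| < 1) (hρ : |ρ| < 1) (hK : 0 < s / τ) {β : ℝ}
    (hβ : β ^ 2 ≤ 1) : 0 < Dfun δ ψ ρ s τ β := by
  have hδβρ : |δ * β ^ 2 * ρ| < 1 := by
    rw [abs_mul, abs_mul, abs_of_nonneg (sq_nonneg β)]
    calc |δ| * β ^ 2 * |ρ| ≤ |δ| * 1 * 1 := by gcongr
      _ < 1 := by simpa using hδ
  have hρ2 : 0 < 1 - ρ ^ 2 := by nlinarith [sq_abs ρ, abs_nonneg ρ]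
  obtain ⟨hlo, hhi⟩ := abs_lt.1 hδβρ
  unfold Dfun
  have := mul_pos (mul_pos hρ2 (sub_pos.2 hhi)) hK
  nlinarith [sq_nonneg ψ]

theorem eq_Ffun_iff_isRoot {β : ℝ} (hD : Dfun δ ψ ρ s τ β ≠ 0) :
    β = Ffun δ ψ ρ s τ β ↔ (equilibriumPoly δ ψ ρ s τ).IsRoot β := by
  rw [IsRoot, eval_equilibriumPoly, Ffun, ← sub_eq_iff_eq_add', eq_div_iff hD, sub_eq_zero]

theorem equilibria_eq_roots (hδ : |δ| < 1) (hρ : |ρ| < 1) (hK : 0 < s / τ) :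
    {β : ℝ | β ∈ Set.Icc (0 : ℝ) 1 ∧ β = Ffun δ ψ ρ s τ β} =
      {β : ℝ | β ∈ Set.Icc (0 : ℝ) 1 ∧ (equilibriumPoly δ ψ ρ s τ).IsRoot β} := by
  ext β
  refine and_congr_right fun hβ => eq_Ffun_iff_isRoot (Dfun_pos hδ hρ hK ?_).ne'
  nlinarith [hβ.1, hβ.2]

theorem eval_equilibriumPoly_zero_neg (hψ : ψ ≠ 0) (hρ : 0 < ρ) :
    (equilibriumPoly δ ψ ρ s τ).eval 0 < 0 := by
  have : 0 < ψ ^ 2 * ρ := by positivity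
  simpa [equilibriumPoly] using this

theorem eval_equilibriumPoly_one_pos (hδ : |δ| < 1) (hρ : |ρ| < 1) (hψ : ψ ≠ 0)
    (hK : 0 < s / τ) : 0 < (equilibriumPoly δ ψ ρ s τ).eval 1 := by
  obtain ⟨hδlo, hδhi⟩ := abs_lt.1 hδ
  obtain ⟨hρlo, hρhi⟩ := abs_lt.1 hρ
  have hfactor : (equilibriumPoly δ ψ ρ s τ).eval 1 =
      (1 - δ) * (ψ ^ 2 * (1 - ρ) + (1 - ρ ^ 2) * (1 - δ * ρ) * (s / τ)) := by
    rw [eval_equilibriumPoly, Dfun]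
    ring
  have hδρ : 0 < 1 - δ * ρ := by nlinarith
  have hρ2 : 0 < 1 - ρ ^ 2 := by nlinarith
  rw [hfactor]
  have : 0 < ψ ^ 2 := by positivity
  have := mul_pos (mul_pos hρ2 hδρ) hK
  apply mul_pos <;> nlinarith

theorem exists_nonneg_roots_equilibriumPoly_subset_triple (hρ0 : 0 < ρ) (hρ1 : ρ < 1)
    (hψ : ψ ≠ 0) (hK : 0 ≤ s / τ) : ∃ a b c : ℝ,
      {β : ℝ | 0 ≤ β ∧ (equilibriumPoly δ ψ ρ s τ).IsRoot β} ⊆ {a, b, c} := by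
  set P := equilibriumPoly δ ψ ρ s τ
  have hP0 : P.eval 0 < 0 := eval_equilibriumPoly_zero_neg hψ hρ0
  have hP : P ≠ 0 := fun h => by simp [h] at hP0
  have hcard : (P.roots.toFinset.filter (0 ≤ ·)).card ≤ 3 := by
    have hdeg : P.natDegree ≤ 4 := natDegree_equilibriumPoly_le
    rcases hdeg.lt_or_eq with hlt | h4
    · calc (P.roots.toFinset.filter (0 ≤ ·)).card ≤ P.roots.toFinset.card :=
            Finset.card_filter_le _ _
        _ ≤ P.natDegree := (Multiset.toFinset_card_le _).trans (card_roots' P)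
        _ ≤ 3 := by omega
    · have hlead : 0 < P.leadingCoeff := by
        refine lt_of_le_of_ne ?_ (leadingCoeff_ne_zero.2 hP).symm
        rw [leadingCoeff, h4, coeff_equilibriumPoly_four]
        have : 0 ≤ 1 - ρ ^ 2 := by nlinarith
        positivity
      obtain ⟨r, hr, hroot⟩ :=
        exists_neg_isRoot_of_even_natDegree (h4 ▸ even_two_mul 2) hlead hP0
      have := card_nonneg_roots_lt_natDegree hP hr hroot
      omega
  obtain ⟨a, b, c, habc⟩ := Finset.exists_subset_triple_of_card_le_three hcard
  refine ⟨a, b, c, fun β ⟨hβ, hroot⟩ => habc ?_⟩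
  simp [hP, hβ, hroot.eq_zero]

end Equilibria

/-- If `|δ| < 1`, `0 < ρ < 1`, `ψ ≠ 0`, `s > 0`, `τ > 0`, then the set
`S = {β ∈ [0,1] : β = F(β;λ)}` of behavioural equilibria is nonempty, every element
lies in the open interval `(0,1)`, and `S` has at most three elements. -/
theorem equilibria_nonempty_interior_atMostThree (δ ψ ρ s τ : ℝ) (hδ : |δ| < 1)
    (hρ0 : 0 < ρ) (hρ1 : ρ < 1) (hψ : ψ ≠ 0) (hs : 0 < s) (hτ : 0 < τ) :
    {β : ℝ | β ∈ Set.Icc (0 : ℝ) 1 ∧ β = Ffun δ ψ ρ s τ β}.Nonempty ∧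
    {β : ℝ | β ∈ Set.Icc (0 : ℝ) 1 ∧ β = Ffun δ ψ ρ s τ β} ⊆ Set.Ioo (0 : ℝ) 1 ∧
    ∃ a b c : ℝ,
      {β : ℝ | β ∈ Set.Icc (0 : ℝ) 1 ∧ β = Ffun δ ψ ρ s τ β} ⊆ {a, b, c} := by
  have hρ : |ρ| < 1 := abs_lt.2 ⟨by linarith, hρ1⟩
  have hK : 0 < s / τ := div_pos hs hτ
  rw [equilibria_eq_roots hδ hρ hK]
  set P := equilibriumPoly δ ψ ρ s τ
  have hP0 : P.eval 0 < 0 := eval_equilibriumPoly_zero_neg hψ hρ0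
  have hP1 : 0 < P.eval 1 := eval_equilibriumPoly_one_pos hδ hρ hψ hK
  refine ⟨?_, ?_, ?_⟩
  · obtain ⟨β, hβ, hroot⟩ :=
      intermediate_value_Ioo zero_le_one P.continuous.continuousOn ⟨hP0, hP1⟩
    exact ⟨β, Set.Ioo_subset_Icc_self hβ, hroot⟩
  · rintro β ⟨⟨hβ0, hβ1⟩, hroot⟩
    refine ⟨hβ0.lt_of_ne ?_, hβ1.lt_of_ne ?_⟩ <;> rintro rfl
    exacts [hP0.ne hroot, hP1.ne' hroot]
  · obtain ⟨a, b, c, habc⟩ :=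
      exists_nonneg_roots_equilibriumPoly_subset_triple hρ0 hρ1 hψ hK.le (δ := δ)
    exact ⟨a, b, c, fun β hβ => habc ⟨hβ.1.1, hβ.2⟩⟩
end
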